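/- Under Assumption 2, let p ∈ [1,q] and γ ∈ (0,1]. There exists a constant K, independent of the admissible step size Δ, of u₁, u₂, and of k, such that for every f ∈ C_{p,γ}(E^h;ℝ), all u₁, u₂ ∈ E^h and every k ∈ ℕ: |P^Δ_{t_k} f(u₁) − P^Δ_{t_k} f(u₂)| ≤ K·‖f‖_{p,γ}·‖u₁−u₂‖^γ·(1+‖u₁‖^{p·q̃/2+γκ}+‖u₂‖^{p·q̃/2+γκ})·(ρ^Δ(t_k))^γ. -/

import Mathlib

open MeasureTheory Filter Set Topology ENNReal
noncomputable section

namespace PaperProb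

variable {E Ω : Type*}

/-! ### Test function spaces `C_{p,γ}` -/

section QuasiMetric
variable [NormedAddCommGroup E]

/-- the quasi-metric `d_{p,γ}` -/
def dQ (p γ : ℝ) (u₁ u₂ : E) : ℝ :=
  min 1 (‖u₁ - u₂‖ ^ γ) * (1 + ‖u₁‖ ^ p + ‖u₂‖ ^ p) ^ ((1 : ℝ) / 2)

def wQuot (p : ℝ) (f : E → ℝ) (u : E) : ℝ :=
  |f u| / (1 + ‖u‖ ^ (p / 2))

def hQuot (p γ : ℝ) (f : E → ℝ) (pr : E × E) : ℝ :=
  |f pr.1 - f pr.2| / dQ p γ pr.1 pr.2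

/-- membership in `C_{p,γ}(S;ℝ)` -/
def MemC (S : Set E) (p γ : ℝ) (f : E → ℝ) : Prop :=
  ContinuousOn f S ∧ BddAbove (wQuot p f '' S) ∧ BddAbove (hQuot p γ f '' (S ×ˢ S))

/-- the norm `‖f‖_{p,γ}` of `C_{p,γ}(S;ℝ)` -/
def CNorm (S : Set E) (p γ : ℝ) (f : E → ℝ) : ℝ :=
  sSup (wQuot p f '' S) + sSup (hQuot p γ f '' (S ×ˢ S))

end QuasiMetric

/-! ### bounded Wasserstein distance `W₂` -/

section Wasserstein
variable [NormedAddCommGroup E] [MeasurableSpace E]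

def IsCoupling (ν₁ ν₂ : Measure E) (π : Measure (E × E)) : Prop :=
  IsProbabilityMeasure π ∧ π.map Prod.fst = ν₁ ∧ π.map Prod.snd = ν₂

def W2 (ν₁ ν₂ : Measure E) : ℝ :=
  (⨅ π : {π : Measure (E × E) // IsCoupling ν₁ ν₂ π},
      ∫ pr : E × E, min 1 (‖pr.1 - pr.2‖ ^ 2) ∂π.1) ^ ((1 : ℝ) / 2)

end Wasserstein

/-- boundedness of a test functional -/
def Bdd {α : Type*} (f : α → ℝ) : Prop := ∃ C, ∀ u, |f u| ≤ C

/-! ### Markov semigroups and invariant measures -/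

section Markov
variable [MeasurableSpace Ω]

/-- the semigroup `P_t f (x) = 𝔼[f(X^x_t)]` -/
def Pt (ℙ : Measure Ω) (X : E → ℝ → Ω → E) (t : ℝ) (f : E → ℝ) (x : E) : ℝ :=
  ∫ ω, f (X x t ω) ∂ℙ

/-- the numerical semigroup `P^Δ_{t_k} f (x) = 𝔼[f(Y^{x,Δ}_{t_k})]` -/
def PD (ℙ : Measure Ω) (Y : ℝ × ℝ → E → ℕ → Ω → E) (Δ : ℝ × ℝ) (k : ℕ)
    (f : E → ℝ) (x : E) : ℝ :=
  ∫ ω, f (Y Δ x k ω) ∂ℙ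

/-- invariant probability measure of the continuous-time Markov family -/
def IsInvMeasure [MeasurableSpace E] (ℙ : Measure Ω) (X : E → ℝ → Ω → E)
    (μ : Measure E) : Prop :=
  IsProbabilityMeasure μ ∧
    ∀ t : ℝ, 0 ≤ t → ∀ f : E → ℝ, Measurable f → Bdd f →
      ∫ x, Pt ℙ X t f x ∂μ = ∫ x, f x ∂μ

/-- invariant probability measure (supported on `S = E^h`) of the numerical chain -/
def IsInvMeasureD [MeasurableSpace E] (ℙ : Measure Ω) (Y : ℝ × ℝ → E → ℕ → Ω → E)
    (S : Set E) (Δ : ℝ × ℝ) (ν : Measure E) : Prop :=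
  IsProbabilityMeasure ν ∧ ν Sᶜ = 0 ∧
    ∀ k : ℕ, ∀ f : E → ℝ, Measurable f → Bdd f →
      ∫ x, PD ℙ Y Δ k f x ∂ν = ∫ x, f x ∂ν

end Markov

/-- admissible step sizes `Δ = (h,τ)` -/
def Adm (ht τt : ℝ) (Δ : ℝ × ℝ) : Prop :=
  Δ.1 ∈ Set.Icc (0 : ℝ) ht ∧ Δ.2 ∈ Set.Ioc (0 : ℝ) τt

/-! ### Assumptions of the paper -/

/-- Assumption 1: time-homogeneous Markov family with moment bound and contraction. -/
structure Assumption1 [NormedAddCommGroup E] [NormedSpace ℝ E] [MeasurableSpace E]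
    [BorelSpace E] {mΩ : MeasurableSpace Ω} (ℙ : Measure Ω) (ℱ : Filtration ℝ mΩ)
    (X : E → ℝ → Ω → E) (r rt γ₁ β L₁ L₂ : ℝ) (ρ : ℝ → ℝ) : Prop where
  prob : IsProbabilityMeasure ℙ
  init : ∀ x ω, X x 0 ω = x
  jmeas : ∀ t : ℝ, Measurable fun p : E × Ω => X p.1 t p.2
  pathMeas : ∀ x ω, Measurable fun t : ℝ => X x t ω
  adapted : ∀ x, ∀ t : ℝ, 0 ≤ t → Measurable[ℱ t] (X x t)
  markov : ∀ f : E → ℝ, Measurable f → Bdd f → ∀ x, ∀ s t : ℝ, 0 ≤ s → 0 ≤ t →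
    (ℙ[(fun ω => f (X x (s + t) ω))|ℱ s]) =ᵐ[ℙ] fun ω => ∫ ω', f (X (X x s ω) t ω') ∂ℙ
  hr : 2 ≤ r
  hrt : 1 ≤ rt
  hL₁ : 0 < L₁
  moment : ∀ x, ∀ t : ℝ, 0 ≤ t →
    ∫⁻ ω, (‖X x t ω‖₊ : ℝ≥0∞) ^ r ∂ℙ ≤ ENNReal.ofReal (L₁ * (1 + ‖x‖ ^ (rt * r)))
  hγ₁ : γ₁ ∈ Set.Ioc (0 : ℝ) 1
  hβ : β ∈ Set.Icc (0 : ℝ) (r - 1)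
  hL₂ : 0 < L₂
  ρ_cont : Continuous ρ
  ρ_nonneg : ∀ t, 0 ≤ ρ t
  ρ_int : IntegrableOn (fun t => ρ t ^ γ₁) (Set.Ici (0 : ℝ))
  contract : ∀ x y, ∀ t : ℝ, 0 ≤ t →
    (∫⁻ ω, (‖X x t ω - X y t ω‖₊ : ℝ≥0∞) ^ (2 : ℝ) ∂ℙ) ^ ((1 : ℝ) / 2) ≤
      ENNReal.ofReal (L₂ * ‖x - y‖ * (1 + ‖x‖ ^ β + ‖y‖ ^ β) * ρ t)

/-- Assumption 2: numerical discretization as a time-homogeneous Markov chain with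
uniform moment bound and strong-mixing-type contraction. -/
structure Assumption2 [NormedAddCommGroup E] [NormedSpace ℝ E] [MeasurableSpace E]
    [BorelSpace E] {mΩ : MeasurableSpace Ω} (ℙ : Measure Ω) (ℱ : Filtration ℝ mΩ)
    (Eh : ℝ → Set E) (Y : ℝ × ℝ → E → ℕ → Ω → E)
    (ht τt q qt γ₂ κ L₃ L₄ : ℝ) (ρD : ℝ × ℝ → ℝ → ℝ) : Prop where
  prob : IsProbabilityMeasure ℙ
  hht : ht ∈ Set.Icc (0 : ℝ) 1
  hτt : τt ∈ Set.Ioc (0 : ℝ) 1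
  hE0 : Eh 0 = Set.univ
  init : ∀ Δ, Adm ht τt Δ → ∀ x ∈ Eh Δ.1, ∀ ω, Y Δ x 0 ω = x
  stateMem : ∀ Δ, Adm ht τt Δ → ∀ x ∈ Eh Δ.1, ∀ (k : ℕ) ω, Y Δ x k ω ∈ Eh Δ.1
  jmeas : ∀ Δ, ∀ k : ℕ, Measurable fun p : E × Ω => Y Δ p.1 k p.2
  adapted : ∀ Δ, Adm ht τt Δ → ∀ x ∈ Eh Δ.1, ∀ k : ℕ,
    Measurable[ℱ ((k : ℝ) * Δ.2)] (Y Δ x k)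
  markov : ∀ Δ, Adm ht τt Δ → ∀ x ∈ Eh Δ.1, ∀ f : E → ℝ, Measurable f → Bdd f →
    ∀ j k : ℕ,
      (ℙ[(fun ω => f (Y Δ x (j + k) ω))|ℱ ((j : ℝ) * Δ.2)]) =ᵐ[ℙ]
        fun ω => ∫ ω', f (Y Δ (Y Δ x j ω) k ω') ∂ℙ
  hq : 2 ≤ q
  hqt : 1 ≤ qt
  hL₃ : 0 < L₃
  moment : ∀ Δ, Adm ht τt Δ → ∀ x ∈ Eh Δ.1, ∀ k : ℕ,
    ∫⁻ ω, (‖Y Δ x k ω‖₊ : ℝ≥0∞) ^ q ∂ℙ ≤ ENNReal.ofReal (L₃ * (1 + ‖x‖ ^ (qt * q)))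
  hγ₂ : γ₂ ∈ Set.Ioc (0 : ℝ) 1
  hκ : κ ∈ Set.Icc (0 : ℝ) (q - 1)
  hL₄ : 0 < L₄
  ρD_nonneg : ∀ Δ t, 0 ≤ ρD Δ t
  ρD_sum : ∃ B : ℝ, ∀ Δ, Adm ht τt Δ →
    Summable (fun k : ℕ => ρD Δ ((k : ℝ) * Δ.2) ^ γ₂) ∧
      Δ.2 * ∑' k : ℕ, ρD Δ ((k : ℝ) * Δ.2) ^ γ₂ ≤ B
  contract : ∀ Δ, Adm ht τt Δ → ∀ x ∈ Eh Δ.1, ∀ y ∈ Eh Δ.1, ∀ k : ℕ,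
    (∫⁻ ω, (‖Y Δ x k ω - Y Δ y k ω‖₊ : ℝ≥0∞) ^ (2 : ℝ) ∂ℙ) ^ ((1 : ℝ) / 2) ≤
      ENNReal.ofReal (L₄ * ‖x - y‖ * (1 + ‖x‖ ^ κ + ‖y‖ ^ κ) * ρD Δ ((k : ℝ) * Δ.2))

/-- Assumption 3: uniform-in-time strong convergence of order `α` of the discretization
(started at the discretized initial datum `xh h` of `x`). -/
structure Assumption3 [NormedAddCommGroup E] [MeasurableSpace E]
    {mΩ : MeasurableSpace Ω} (ℙ : Measure Ω)
    (X : E → ℝ → Ω → E) (Y : ℝ × ℝ → E → ℕ → Ω → E) (Eh : ℝ → Set E)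
    (ht τt rt qt : ℝ) (x : E) (xh : ℝ → E) (α₁ α₂ L₅ : ℝ) : Prop where
  hα₁ : 0 < α₁
  hα₂ : 0 < α₂
  hL₅ : 0 < L₅
  xh_mem : ∀ h : ℝ, h ∈ Set.Icc (0 : ℝ) ht → xh h ∈ Eh h
  xh_eq : ∀ h : ℝ, x ∈ Eh h → xh h = x
  conv : ∀ Δ, Adm ht τt Δ → ∀ t : ℝ, 0 ≤ t →
    (∫⁻ ω, (‖X x t ω - Y Δ (xh Δ.1) ⌊t / Δ.2⌋₊ ω‖₊ : ℝ≥0∞) ^ (2 : ℝ) ∂ℙ) ^ ((1 : ℝ) / 2) ≤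
      ENNReal.ofReal (L₅ * (1 + ‖x‖ ^ (max rt qt)) * (Δ.1 ^ α₁ + Δ.2 ^ α₂))

/-! ### the discrete martingale and related objects -/

/-- the filtration `{F_{t_k}}_{k∈ℕ}` -/
def natFiltration {mΩ : MeasurableSpace Ω} (ℱ : Filtration ℝ mΩ) (τ : ℝ) (hτ : 0 ≤ τ) :
    Filtration ℕ mΩ where
  seq k := ℱ ((k : ℝ) * τ)
  mono' := fun _ _ hij =>
    ℱ.mono (mul_le_mul_of_nonneg_right (by exact_mod_cast hij) hτ)
  le' k := ℱ.le _

/-- the discrete martingale `M^{x^h,Δ}_k` (here `m` stands for `μ^Δ(f)`) -/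
def Mart [MeasurableSpace Ω] (ℙ : Measure Ω) (Y : ℝ × ℝ → E → ℕ → Ω → E)
    (Δ : ℝ × ℝ) (f : E → ℝ) (m : ℝ) (xh : E) (k : ℕ) (ω : Ω) : ℝ :=
  Δ.2 * ∑ i ∈ Finset.range k, (f (Y Δ xh i ω) - m) +
    Δ.2 * ∑' i : ℕ, (PD ℙ Y Δ i f (Y Δ xh k ω) - m) -
    Δ.2 * ∑' i : ℕ, (PD ℙ Y Δ i f xh - m)

/-- the martingale difference sequence `Z^{x^h,Δ}_k` -/
def Zseq [MeasurableSpace Ω] (ℙ : Measure Ω) (Y : ℝ × ℝ → E → ℕ → Ω → E)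
    (Δ : ℝ × ℝ) (f : E → ℝ) (m : ℝ) (xh : E) (k : ℕ) (ω : Ω) : ℝ :=
  if k = 0 then 0 else Mart ℙ Y Δ f m xh k ω - Mart ℙ Y Δ f m xh (k - 1) ω

/-- the conditional-variance function `H^Δ` -/
def Hfun [MeasurableSpace Ω] (ℙ : Measure Ω) (Y : ℝ × ℝ → E → ℕ → Ω → E)
    (Δ : ℝ × ℝ) (f : E → ℝ) (m : ℝ) (u : E) : ℝ :=
  -(Δ.2 ^ 2) * |f u - m| ^ 2 +
    Δ.2 ^ 2 * ∫ ω, |∑' i : ℕ, (PD ℙ Y Δ i f (Y Δ u 1 ω) - m)| ^ 2 ∂ℙ -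
    Δ.2 ^ 2 * |∑' i : ℕ, (PD ℙ Y Δ i f u - m)| ^ 2 +
    2 * Δ.2 ^ 2 * (f u - m) * ∑' i : ℕ, (PD ℙ Y Δ i f u - m)

/-!
The difference `P^Δ_{t_k} f(u₁) − P^Δ_{t_k} f(u₂)` is the expectation of
`f(Y^{u₁}) − f(Y^{u₂})`, which membership in `C_{p,γ}` bounds by
`‖f‖_{p,γ} ‖Y^{u₁} − Y^{u₂}‖^γ (1 + ‖Y^{u₁}‖^p + ‖Y^{u₂}‖^p)^{1/2}`. Cauchy–Schwarz separates
the two factors. Since `γ ≤ 1`, Jensen bounds the first by the `γ`-th power of the `L²`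
contraction estimate; since `p ≤ q`, it bounds the second by the `q`-th moments. The polynomial
weights are finally merged through `a^s b^t ≤ max(1, a, b)^{s+t}`.
-/

section RealInequalities

theorem one_add_rpow_le {x e : ℝ} (hx : 0 ≤ x) (he₀ : 0 ≤ e) (he₁ : e ≤ 1) :
    (1 + x) ^ e ≤ 1 + x ^ e := by
  simpa using Real.rpow_add_le_add_rpow zero_le_one hx he₀ he₁

theorem one_add_add_rpow_le {x y e : ℝ} (hx : 0 ≤ x) (hy : 0 ≤ y) (he₀ : 0 ≤ e) (he₁ : e ≤ 1) :
    (1 + x + y) ^ e ≤ 1 + x ^ e + y ^ e := by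
  have := one_add_rpow_le hx he₀ he₁
  linarith [Real.rpow_add_le_add_rpow (by positivity : 0 ≤ 1 + x) hy he₀ he₁]

theorem one_add_rpow_add_rpow_le_three_mul {a b s : ℝ} (ha : 0 ≤ a) (hb : 0 ≤ b) (hs : 0 ≤ s) :
    1 + a ^ s + b ^ s ≤ 3 * max 1 (max a b) ^ s := by
  have h₁ : (1 : ℝ) ≤ max 1 (max a b) ^ s := Real.one_le_rpow (le_max_left _ _) hs
  have ha' : a ^ s ≤ max 1 (max a b) ^ s :=
    Real.rpow_le_rpow ha ((le_max_left a b).trans (le_max_right _ _)) hs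
  have hb' : b ^ s ≤ max 1 (max a b) ^ s :=
    Real.rpow_le_rpow hb ((le_max_right a b).trans (le_max_right _ _)) hs
  linarith

theorem max_one_max_rpow_le {a b s : ℝ} (ha : 0 ≤ a) (hb : 0 ≤ b) :
    max 1 (max a b) ^ s ≤ 1 + a ^ s + b ^ s := by
  have := Real.rpow_nonneg ha s
  have := Real.rpow_nonneg hb s
  rcases max_choice 1 (max a b) with h | h <;> rw [h]
  · rw [Real.one_rpow]; linarith
  · rcases max_choice a b with h' | h' <;> rw [h'] <;> linarith

theorem one_add_rpow_add_rpow_mul_le {a b s t : ℝ} (ha : 0 ≤ a) (hb : 0 ≤ b) (hs : 0 ≤ s)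
    (ht : 0 ≤ t) :
    (1 + a ^ s + b ^ s) * (1 + a ^ t + b ^ t) ≤ 9 * (1 + a ^ (s + t) + b ^ (s + t)) := by
  have hM : 0 < max 1 (max a b) := lt_of_lt_of_le one_pos (le_max_left _ _)
  calc (1 + a ^ s + b ^ s) * (1 + a ^ t + b ^ t)
      ≤ (3 * max 1 (max a b) ^ s) * (3 * max 1 (max a b) ^ t) := by
        gcongr <;> exact one_add_rpow_add_rpow_le_three_mul ha hb ‹_›
    _ = 9 * max 1 (max a b) ^ (s + t) := by rw [Real.rpow_add hM]; ring
    _ ≤ 9 * (1 + a ^ (s + t) + b ^ (s + t)) := by gcongr; exact max_one_max_rpow_le ha hb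

theorem rpow_contraction_bound_le {L c a b r κ γ : ℝ} (hL : 0 ≤ L) (hc : 0 ≤ c) (ha : 0 ≤ a)
    (hb : 0 ≤ b) (hr : 0 ≤ r) (hγ₀ : 0 ≤ γ) (hγ₁ : γ ≤ 1) :
    (L * c * (1 + a ^ κ + b ^ κ) * r) ^ γ ≤
      (1 + L) * (c ^ γ * (1 + a ^ (γ * κ) + b ^ (γ * κ)) * r ^ γ) := by
  have hL' : L ^ γ ≤ 1 + L := by
    rcases le_total L 1 with h | h
    · linarith [Real.rpow_le_one hL h hγ₀]
    · linarith [Real.rpow_le_self_of_one_le h hγ₁]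
  have hw : (1 + a ^ κ + b ^ κ) ^ γ ≤ 1 + a ^ (γ * κ) + b ^ (γ * κ) := by
    simpa only [← Real.rpow_mul ha, ← Real.rpow_mul hb, mul_comm κ γ] using
      one_add_add_rpow_le (Real.rpow_nonneg ha κ) (Real.rpow_nonneg hb κ) hγ₀ hγ₁
  rw [Real.mul_rpow (by positivity) hr, Real.mul_rpow (by positivity) (by positivity),
    Real.mul_rpow hL hc]
  calc L ^ γ * c ^ γ * (1 + a ^ κ + b ^ κ) ^ γ * r ^ γ
      ≤ (1 + L) * c ^ γ * (1 + a ^ (γ * κ) + b ^ (γ * κ)) * r ^ γ := by gcongr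
    _ = _ := by ring

theorem sqrt_moment_bound_le {M a b s : ℝ} (hM : 0 ≤ M) (ha : 0 ≤ a) (hb : 0 ≤ b) :
    (1 + M * (1 + a ^ s) + M * (1 + b ^ s)) ^ (1 / 2 : ℝ) ≤
      (1 + 2 * M) ^ (1 / 2 : ℝ) * (1 + a ^ (s / 2) + b ^ (s / 2)) := by
  have has := Real.rpow_nonneg ha s
  have hbs := Real.rpow_nonneg hb s
  have hsplit : 1 + M * (1 + a ^ s) + M * (1 + b ^ s) ≤ (1 + 2 * M) * (1 + a ^ s + b ^ s) := by
    nlinarith [mul_nonneg hM has, mul_nonneg hM hbs]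
  calc (1 + M * (1 + a ^ s) + M * (1 + b ^ s)) ^ (1 / 2 : ℝ)
      ≤ ((1 + 2 * M) * (1 + a ^ s + b ^ s)) ^ (1 / 2 : ℝ) := by gcongr
    _ = (1 + 2 * M) ^ (1 / 2 : ℝ) * (1 + a ^ s + b ^ s) ^ (1 / 2 : ℝ) :=
        Real.mul_rpow (by positivity) (by positivity)
    _ ≤ (1 + 2 * M) ^ (1 / 2 : ℝ) * (1 + a ^ (s / 2) + b ^ (s / 2)) := by
        gcongr
        simpa only [← Real.rpow_mul ha, ← Real.rpow_mul hb, mul_one_div] using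
          one_add_add_rpow_le (e := 1 / 2) has hbs (by norm_num) (by norm_num)

theorem contraction_moment_product_le {H C L M c a b r κ γ s : ℝ} (hH : 0 ≤ H) (hHC : H ≤ C)
    (hL : 0 ≤ L) (hM : 0 ≤ M) (hc : 0 ≤ c) (ha : 0 ≤ a) (hb : 0 ≤ b) (hr : 0 ≤ r) (hκ : 0 ≤ κ)
    (hs : 0 ≤ s) (hγ₀ : 0 ≤ γ) (hγ₁ : γ ≤ 1) :
    H * (L * c * (1 + a ^ κ + b ^ κ) * r) ^ γ *
        (1 + M * (1 + a ^ s) + M * (1 + b ^ s)) ^ (1 / 2 : ℝ) ≤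
      9 * (1 + L) * (1 + 2 * M) ^ (1 / 2 : ℝ) * C * c ^ γ *
        (1 + a ^ (s / 2 + γ * κ) + b ^ (s / 2 + γ * κ)) * r ^ γ := by
  have hC := hH.trans hHC
  calc H * (L * c * (1 + a ^ κ + b ^ κ) * r) ^ γ *
        (1 + M * (1 + a ^ s) + M * (1 + b ^ s)) ^ (1 / 2 : ℝ)
      ≤ H * ((1 + L) * (c ^ γ * (1 + a ^ (γ * κ) + b ^ (γ * κ)) * r ^ γ)) *
          ((1 + 2 * M) ^ (1 / 2 : ℝ) * (1 + a ^ (s / 2) + b ^ (s / 2))) := by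
        gcongr
        · exact rpow_contraction_bound_le hL hc ha hb hr hγ₀ hγ₁
        · exact sqrt_moment_bound_le hM ha hb
    _ = (1 + L) * (1 + 2 * M) ^ (1 / 2 : ℝ) * H * c ^ γ *
          ((1 + a ^ (s / 2) + b ^ (s / 2)) * (1 + a ^ (γ * κ) + b ^ (γ * κ))) * r ^ γ := by ring
    _ ≤ (1 + L) * (1 + 2 * M) ^ (1 / 2 : ℝ) * C * c ^ γ *
          (9 * (1 + a ^ (s / 2 + γ * κ) + b ^ (s / 2 + γ * κ))) * r ^ γ := by
        gcongr _ * _ * ?_ * _ * ?_ * _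
        exact one_add_rpow_add_rpow_mul_le ha hb (by positivity) (by positivity)
    _ = _ := by ring

end RealInequalities

section Lintegral

variable [MeasurableSpace Ω] {μ : Measure Ω} [IsProbabilityMeasure μ]

theorem lintegral_rpow_le_rpow_lintegral {g : Ω → ℝ≥0∞} (hg : AEMeasurable g μ) {γ : ℝ}
    (hγ₀ : 0 ≤ γ) (hγ₁ : γ ≤ 1) :
    ∫⁻ ω, g ω ^ γ ∂μ ≤ (∫⁻ ω, g ω ∂μ) ^ γ := by
  -- Hölder with exponents `1/γ` and `1/(1-γ)` against the constant function `1`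
  simpa using ENNReal.lintegral_mul_norm_pow_le hg (aemeasurable_const (b := 1)) hγ₀
    (sub_nonneg.2 hγ₁) (add_sub_cancel γ 1)

theorem lintegral_rpow_mul_sqrt_le {A V : Ω → ℝ≥0∞} (hA : AEMeasurable A μ)
    (hV : AEMeasurable V μ) {γ : ℝ} (hγ₀ : 0 ≤ γ) (hγ₁ : γ ≤ 1) :
    ∫⁻ ω, A ω ^ γ * V ω ^ (1 / 2 : ℝ) ∂μ ≤
      (∫⁻ ω, A ω ^ (2 : ℝ) ∂μ) ^ (γ / 2) * (∫⁻ ω, V ω ∂μ) ^ (1 / 2 : ℝ) := by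
  have hA' : ∀ ω, A ω ^ γ = ((A ω ^ (2 : ℝ)) ^ γ) ^ (1 / 2 : ℝ) := fun ω => by
    rw [← ENNReal.rpow_mul, ← ENNReal.rpow_mul]; ring_nf
  calc ∫⁻ ω, A ω ^ γ * V ω ^ (1 / 2 : ℝ) ∂μ
      = ∫⁻ ω, ((A ω ^ (2 : ℝ)) ^ γ) ^ (1 / 2 : ℝ) * V ω ^ (1 / 2 : ℝ) ∂μ := by simp_rw [← hA']
    _ ≤ (∫⁻ ω, (A ω ^ (2 : ℝ)) ^ γ ∂μ) ^ (1 / 2 : ℝ) * (∫⁻ ω, V ω ∂μ) ^ (1 / 2 : ℝ) :=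
        ENNReal.lintegral_mul_norm_pow_le ((hA.pow_const 2).pow_const γ) hV (by norm_num)
          (by norm_num) (by norm_num)
    _ ≤ ((∫⁻ ω, A ω ^ (2 : ℝ) ∂μ) ^ γ) ^ (1 / 2 : ℝ) * (∫⁻ ω, V ω ∂μ) ^ (1 / 2 : ℝ) := by
        gcongr; exact lintegral_rpow_le_rpow_lintegral (hA.pow_const 2) hγ₀ hγ₁
    _ = (∫⁻ ω, A ω ^ (2 : ℝ) ∂μ) ^ (γ / 2) * (∫⁻ ω, V ω ∂μ) ^ (1 / 2 : ℝ) := by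
        rw [← ENNReal.rpow_mul]; ring_nf

end Lintegral

section TestFunctions

variable [NormedAddCommGroup E] {S : Set E} {p γ : ℝ} {f : E → ℝ}

def growthNorm (S : Set E) (p : ℝ) (f : E → ℝ) : ℝ :=
  sSup (wQuot p f '' S)

def holderSeminorm (S : Set E) (p γ : ℝ) (f : E → ℝ) : ℝ :=
  sSup (hQuot p γ f '' (S ×ˢ S))

theorem CNorm_eq_add : CNorm S p γ f = growthNorm S p f + holderSeminorm S p γ f := rfl

theorem dQ_nonneg (x y : E) : 0 ≤ dQ p γ x y := by
  unfold dQ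
  have : 0 ≤ ‖x - y‖ ^ γ := by positivity
  positivity

theorem MemC.abs_le (hf : MemC S p γ f) {u : E} (hu : u ∈ S) :
    |f u| ≤ growthNorm S p f * (1 + ‖u‖ ^ (p / 2)) := by
  have h := le_csSup hf.2.1 ⟨u, hu, rfl⟩
  rwa [wQuot, div_le_iff₀ (by positivity)] at h

theorem MemC.growthNorm_nonneg (hf : MemC S p γ f) (hS : S.Nonempty) :
    0 ≤ growthNorm S p f := by
  obtain ⟨u, hu⟩ := hS
  exact (div_nonneg (abs_nonneg _) (by positivity)).trans (le_csSup hf.2.1 ⟨u, hu, rfl⟩)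

theorem MemC.holderSeminorm_nonneg (hf : MemC S p γ f) (hS : S.Nonempty) :
    0 ≤ holderSeminorm S p γ f := by
  obtain ⟨u, hu⟩ := hS
  exact (div_nonneg (abs_nonneg _) (dQ_nonneg _ _)).trans
    (le_csSup hf.2.2 ⟨(u, u), ⟨hu, hu⟩, rfl⟩)

theorem MemC.abs_sub_le (hf : MemC S p γ f) (hγ : 0 < γ) {x y : E} (hx : x ∈ S) (hy : y ∈ S) :
    |f x - f y| ≤
      holderSeminorm S p γ f * (‖x - y‖ ^ γ * (1 + ‖x‖ ^ p + ‖y‖ ^ p) ^ (1 / 2 : ℝ)) := by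
  rcases eq_or_ne x y with rfl | hxy
  · simp [Real.zero_rpow hγ.ne']
  have hxy' : 0 < ‖x - y‖ := norm_pos_iff.2 (sub_ne_zero.2 hxy)
  have hd : 0 < dQ p γ x y :=
    mul_pos (lt_min one_pos (Real.rpow_pos_of_pos hxy' γ)) (by positivity)
  have h := le_csSup hf.2.2 ⟨(x, y), ⟨hx, hy⟩, rfl⟩
  rw [hQuot, div_le_iff₀ hd] at h
  refine h.trans (mul_le_mul_of_nonneg_left ?_ (hf.holderSeminorm_nonneg ⟨x, hx⟩))
  exact mul_le_mul_of_nonneg_right (min_le_right _ _) (by positivity)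

end TestFunctions

section Expectations

theorem measurable_comp_of_continuousOn [MeasurableSpace Ω] [TopologicalSpace E]
    [MeasurableSpace E] [OpensMeasurableSpace E] {S : Set E} {f : E → ℝ}
    (hf : ContinuousOn f S) {X : Ω → E} (hX : Measurable X) (hXS : ∀ ω, X ω ∈ S) :
    Measurable fun ω => f (X ω) :=
  (continuousOn_iff_continuous_domRestrict.mp hf).measurable.comp (hX.subtype_mk (h := hXS))

variable [NormedAddCommGroup E]

theorem ofReal_norm_rpow (x : E) {s : ℝ} (hs : 0 ≤ s) : ENNReal.ofReal (‖x‖ ^ s) = ‖x‖ₑ ^ s := by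
  rw [← ENNReal.ofReal_rpow_of_nonneg (norm_nonneg x) hs, ofReal_norm]

theorem ofReal_holderWeight (x y : E) {p γ : ℝ} (hp : 0 ≤ p) (hγ : 0 ≤ γ) :
    ENNReal.ofReal (‖x - y‖ ^ γ * (1 + ‖x‖ ^ p + ‖y‖ ^ p) ^ (1 / 2 : ℝ)) =
      ‖x - y‖ₑ ^ γ * (1 + ‖x‖ₑ ^ p + ‖y‖ₑ ^ p) ^ (1 / 2 : ℝ) := by
  rw [ENNReal.ofReal_mul (by positivity), ofReal_norm_rpow _ hγ,
    ← ENNReal.ofReal_rpow_of_nonneg (by positivity) (by norm_num),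
    ENNReal.ofReal_add (by positivity) (by positivity),
    ENNReal.ofReal_add zero_le_one (by positivity), ENNReal.ofReal_one, ofReal_norm_rpow _ hp,
    ofReal_norm_rpow _ hp]

variable [MeasurableSpace Ω] {μ : Measure Ω}

theorem integrable_comp_of_abs_le_rpow [IsFiniteMeasure μ] [MeasurableSpace E]
    [OpensMeasurableSpace E] {f : E → ℝ} {X : Ω → E} {W s : ℝ} (hs : 0 ≤ s) (hX : Measurable X)
    (hfX : Measurable fun ω => f (X ω)) (hbound : ∀ ω, |f (X ω)| ≤ W * (1 + ‖X ω‖ ^ s))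
    (hmom : ∫⁻ ω, ‖X ω‖ₑ ^ s ∂μ ≠ ∞) :
    Integrable (fun ω => f (X ω)) μ := by
  have hXs : Integrable (fun ω => ‖X ω‖ ^ s) μ := by
    refine ⟨(hX.norm.pow_const s).aestronglyMeasurable, ?_⟩
    rw [hasFiniteIntegral_iff_ofReal (ae_of_all _ fun ω => by positivity)]
    simpa only [ofReal_norm_rpow _ hs] using hmom.lt_top
  exact (((integrable_const 1).add hXs).const_mul W).mono' hfX.aestronglyMeasurable
    (ae_of_all _ hbound)

variable [IsProbabilityMeasure μ] [MeasurableSpace E] [BorelSpace E] [SecondCountableTopology E]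

theorem lintegral_edist_comp_le {S : Set E} {f : E → ℝ} {C : ℝ≥0∞} {p γ : ℝ}
    (hγ₀ : 0 ≤ γ) (hγ₁ : γ ≤ 1)
    (hf : ∀ x ∈ S, ∀ y ∈ S,
      edist (f x) (f y) ≤ C * (‖x - y‖ₑ ^ γ * (1 + ‖x‖ₑ ^ p + ‖y‖ₑ ^ p) ^ (1 / 2 : ℝ)))
    {X₁ X₂ : Ω → E} (hX₁ : Measurable X₁) (hX₂ : Measurable X₂) (hS₁ : ∀ ω, X₁ ω ∈ S)
    (hS₂ : ∀ ω, X₂ ω ∈ S) :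
    ∫⁻ ω, edist (f (X₁ ω)) (f (X₂ ω)) ∂μ ≤
      C * ((∫⁻ ω, ‖X₁ ω - X₂ ω‖ₑ ^ (2 : ℝ) ∂μ) ^ (γ / 2) *
        (1 + ∫⁻ ω, ‖X₁ ω‖ₑ ^ p ∂μ + ∫⁻ ω, ‖X₂ ω‖ₑ ^ p ∂μ) ^ (1 / 2 : ℝ)) := by
  have hA : Measurable fun ω => ‖X₁ ω - X₂ ω‖ₑ := (hX₁.sub hX₂).enorm
  have hP₁ : Measurable fun ω => ‖X₁ ω‖ₑ ^ p := hX₁.enorm.pow_const p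
  have hP₂ : Measurable fun ω => ‖X₂ ω‖ₑ ^ p := hX₂.enorm.pow_const p
  have hV : Measurable fun ω => 1 + ‖X₁ ω‖ₑ ^ p + ‖X₂ ω‖ₑ ^ p :=
    (measurable_const.add hP₁).add hP₂
  calc ∫⁻ ω, edist (f (X₁ ω)) (f (X₂ ω)) ∂μ
      ≤ ∫⁻ ω, C * (‖X₁ ω - X₂ ω‖ₑ ^ γ * (1 + ‖X₁ ω‖ₑ ^ p + ‖X₂ ω‖ₑ ^ p) ^ (1 / 2 : ℝ)) ∂μ :=
        lintegral_mono fun ω => hf _ (hS₁ ω) _ (hS₂ ω)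
    _ = C * ∫⁻ ω, ‖X₁ ω - X₂ ω‖ₑ ^ γ * (1 + ‖X₁ ω‖ₑ ^ p + ‖X₂ ω‖ₑ ^ p) ^ (1 / 2 : ℝ) ∂μ :=
        lintegral_const_mul C ((hA.pow_const γ).mul (hV.pow_const _))
    _ ≤ C * ((∫⁻ ω, ‖X₁ ω - X₂ ω‖ₑ ^ (2 : ℝ) ∂μ) ^ (γ / 2) *
          (∫⁻ ω, 1 + ‖X₁ ω‖ₑ ^ p + ‖X₂ ω‖ₑ ^ p ∂μ) ^ (1 / 2 : ℝ)) := by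
        gcongr
        exact lintegral_rpow_mul_sqrt_le hA.aemeasurable hV.aemeasurable hγ₀ hγ₁
    _ = _ := by
        rw [lintegral_add_right _ hP₂, lintegral_add_left measurable_const, lintegral_const,
          measure_univ, one_mul]

theorem abs_integral_comp_sub_le {S : Set E} {f : E → ℝ} {H D m₁ m₂ p γ : ℝ} (hp : 0 ≤ p)
    (hγ₀ : 0 ≤ γ) (hγ₁ : γ ≤ 1) (hH : 0 ≤ H)
    (hf : ∀ x ∈ S, ∀ y ∈ S,
      |f x - f y| ≤ H * (‖x - y‖ ^ γ * (1 + ‖x‖ ^ p + ‖y‖ ^ p) ^ (1 / 2 : ℝ)))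
    {X₁ X₂ : Ω → E} (hX₁ : Measurable X₁) (hX₂ : Measurable X₂) (hS₁ : ∀ ω, X₁ ω ∈ S)
    (hS₂ : ∀ ω, X₂ ω ∈ S) (hi₁ : Integrable (fun ω => f (X₁ ω)) μ)
    (hi₂ : Integrable (fun ω => f (X₂ ω)) μ) (hD : 0 ≤ D)
    (hX₁₂ : (∫⁻ ω, ‖X₁ ω - X₂ ω‖ₑ ^ (2 : ℝ) ∂μ) ^ (1 / 2 : ℝ) ≤ ENNReal.ofReal D)
    (hm₁ : 0 ≤ m₁) (hXm₁ : ∫⁻ ω, ‖X₁ ω‖ₑ ^ p ∂μ ≤ ENNReal.ofReal m₁)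
    (hm₂ : 0 ≤ m₂) (hXm₂ : ∫⁻ ω, ‖X₂ ω‖ₑ ^ p ∂μ ≤ ENNReal.ofReal m₂) :
    |∫ ω, f (X₁ ω) ∂μ - ∫ ω, f (X₂ ω) ∂μ| ≤ H * D ^ γ * (1 + m₁ + m₂) ^ (1 / 2 : ℝ) := by
  have hfe : ∀ x ∈ S, ∀ y ∈ S, edist (f x) (f y) ≤
      ENNReal.ofReal H * (‖x - y‖ₑ ^ γ * (1 + ‖x‖ₑ ^ p + ‖y‖ₑ ^ p) ^ (1 / 2 : ℝ)) := by
    intro x hx y hy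
    rw [← ofReal_holderWeight x y hp hγ₀, ← ENNReal.ofReal_mul hH, edist_dist, Real.dist_eq]
    exact ENNReal.ofReal_le_ofReal (hf x hx y hy)
  have hD₂ : (∫⁻ ω, ‖X₁ ω - X₂ ω‖ₑ ^ (2 : ℝ) ∂μ) ^ (γ / 2) ≤ ENNReal.ofReal D ^ γ := by
    rw [show γ / 2 = 1 / 2 * γ by ring, ENNReal.rpow_mul]
    gcongr
  rw [← Real.dist_eq, ← edist_le_ofReal (by positivity)]
  calc edist (∫ ω, f (X₁ ω) ∂μ) (∫ ω, f (X₂ ω) ∂μ)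
      ≤ ∫⁻ ω, edist (f (X₁ ω)) (f (X₂ ω)) ∂μ := edist_integral_le_lintegral_edist hi₁ hi₂
    _ ≤ ENNReal.ofReal H * ((∫⁻ ω, ‖X₁ ω - X₂ ω‖ₑ ^ (2 : ℝ) ∂μ) ^ (γ / 2) *
          (1 + ∫⁻ ω, ‖X₁ ω‖ₑ ^ p ∂μ + ∫⁻ ω, ‖X₂ ω‖ₑ ^ p ∂μ) ^ (1 / 2 : ℝ)) :=
        lintegral_edist_comp_le hγ₀ hγ₁ hfe hX₁ hX₂ hS₁ hS₂
    _ ≤ ENNReal.ofReal H * (ENNReal.ofReal D ^ γ *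
          (1 + ENNReal.ofReal m₁ + ENNReal.ofReal m₂) ^ (1 / 2 : ℝ)) := by
        gcongr
    _ = ENNReal.ofReal (H * D ^ γ * (1 + m₁ + m₂) ^ (1 / 2 : ℝ)) := by
        rw [ENNReal.ofReal_mul (by positivity), ENNReal.ofReal_mul hH,
          ← ENNReal.ofReal_rpow_of_nonneg hD hγ₀,
          ← ENNReal.ofReal_rpow_of_nonneg (by positivity) (by norm_num),
          ENNReal.ofReal_add (by positivity) hm₂, ENNReal.ofReal_add zero_le_one hm₁,
          ENNReal.ofReal_one, mul_assoc]

end Expectations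

namespace Assumption2

variable [NormedAddCommGroup E] [NormedSpace ℝ E] [MeasurableSpace E] [BorelSpace E]
  {mΩ : MeasurableSpace Ω} {ℙ : Measure Ω} {ℱ : Filtration ℝ mΩ} {Eh : ℝ → Set E}
  {Y : ℝ × ℝ → E → ℕ → Ω → E} {ht τt q qt γ₂ κ L₃ L₄ : ℝ} {ρD : ℝ × ℝ → ℝ → ℝ} {Δ : ℝ × ℝ}

theorem measurable_state (hA2 : Assumption2 ℙ ℱ Eh Y ht τt q qt γ₂ κ L₃ L₄ ρD) (x : E) (k : ℕ) :
    Measurable (Y Δ x k) :=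
  (hA2.jmeas Δ k).comp measurable_prodMk_left

theorem lintegral_enorm_rpow_le (hA2 : Assumption2 ℙ ℱ Eh Y ht τt q qt γ₂ κ L₃ L₄ ρD)
    (hΔ : Adm ht τt Δ) {x : E} (hx : x ∈ Eh Δ.1) (k : ℕ) {e : ℝ} (he₀ : 0 ≤ e) (he : e ≤ q) :
    ∫⁻ ω, ‖Y Δ x k ω‖ₑ ^ e ∂ℙ ≤ ENNReal.ofReal (L₃ ^ (e / q) * (1 + ‖x‖ ^ (e * qt))) := by
  have := hA2.prob
  have hq : 0 < q := by linarith [hA2.hq]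
  have hL₃ := hA2.hL₃
  have hexp : (‖x‖ ^ (qt * q)) ^ (e / q) = ‖x‖ ^ (e * qt) := by
    rw [← Real.rpow_mul (norm_nonneg x)]; congr 1; field_simp
  calc ∫⁻ ω, ‖Y Δ x k ω‖ₑ ^ e ∂ℙ
      = ∫⁻ ω, (‖Y Δ x k ω‖ₑ ^ q) ^ (e / q) ∂ℙ := by
        simp_rw [← ENNReal.rpow_mul, mul_div_cancel₀ e hq.ne']
    _ ≤ (∫⁻ ω, ‖Y Δ x k ω‖ₑ ^ q ∂ℙ) ^ (e / q) :=
        lintegral_rpow_le_rpow_lintegral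
          ((hA2.measurable_state x k).enorm.pow_const q).aemeasurable (by positivity)
          ((div_le_one hq).2 he)
    _ ≤ ENNReal.ofReal (L₃ * (1 + ‖x‖ ^ (qt * q))) ^ (e / q) := by
        gcongr
        simpa only [enorm_eq_nnnorm] using hA2.moment Δ hΔ x hx k
    _ = ENNReal.ofReal ((L₃ * (1 + ‖x‖ ^ (qt * q))) ^ (e / q)) :=
        ENNReal.ofReal_rpow_of_nonneg (by positivity) (by positivity)
    _ ≤ ENNReal.ofReal (L₃ ^ (e / q) * (1 + ‖x‖ ^ (e * qt))) := by
        refine ENNReal.ofReal_le_ofReal ?_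
        rw [Real.mul_rpow hL₃.le (by positivity), ← hexp]
        gcongr
        exact one_add_rpow_le (by positivity) (by positivity) ((div_le_one hq).2 he)

theorem integrable_comp (hA2 : Assumption2 ℙ ℱ Eh Y ht τt q qt γ₂ κ L₃ L₄ ρD)
    (hΔ : Adm ht τt Δ) {f : E → ℝ} {p γ : ℝ} (hf : MemC (Eh Δ.1) p γ f) (hp : 0 ≤ p)
    (hpq : p / 2 ≤ q) {x : E} (hx : x ∈ Eh Δ.1) (k : ℕ) :
    Integrable (fun ω => f (Y Δ x k ω)) ℙ :=
  have := hA2.prob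
  integrable_comp_of_abs_le_rpow (by positivity) (hA2.measurable_state x k)
    (measurable_comp_of_continuousOn hf.1 (hA2.measurable_state x k) (hA2.stateMem Δ hΔ x hx k))
    (fun ω => hf.abs_le (hA2.stateMem Δ hΔ x hx k ω))
    (ne_top_of_le_ne_top ENNReal.ofReal_ne_top
      (hA2.lintegral_enorm_rpow_le hΔ hx k (by positivity) hpq))

theorem abs_PD_sub_le [SecondCountableTopology E]
    (hA2 : Assumption2 ℙ ℱ Eh Y ht τt q qt γ₂ κ L₃ L₄ ρD) (hΔ : Adm ht τt Δ) {f : E → ℝ}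
    {p γ : ℝ} (hf : MemC (Eh Δ.1) p γ f) (hp : 0 ≤ p) (hpq : p ≤ q) (hγ₀ : 0 < γ) (hγ₁ : γ ≤ 1)
    {u₁ u₂ : E} (hu₁ : u₁ ∈ Eh Δ.1) (hu₂ : u₂ ∈ Eh Δ.1) (k : ℕ) :
    |PD ℙ Y Δ k f u₁ - PD ℙ Y Δ k f u₂| ≤
      holderSeminorm (Eh Δ.1) p γ f *
        (L₄ * ‖u₁ - u₂‖ * (1 + ‖u₁‖ ^ κ + ‖u₂‖ ^ κ) * ρD Δ ((k : ℝ) * Δ.2)) ^ γ *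
        (1 + L₃ ^ (p / q) * (1 + ‖u₁‖ ^ (p * qt)) + L₃ ^ (p / q) * (1 + ‖u₂‖ ^ (p * qt))) ^
          (1 / 2 : ℝ) := by
  have := hA2.prob
  have hL₃ := hA2.hL₃
  have hL₄ := hA2.hL₄
  have hρ := hA2.ρD_nonneg Δ ((k : ℝ) * Δ.2)
  have hp2 : p / 2 ≤ q := by linarith [hA2.hq]
  exact abs_integral_comp_sub_le hp hγ₀.le hγ₁ (hf.holderSeminorm_nonneg ⟨u₁, hu₁⟩)
    (fun x hx y hy => hf.abs_sub_le hγ₀ hx hy) (hA2.measurable_state u₁ k)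
    (hA2.measurable_state u₂ k) (hA2.stateMem Δ hΔ u₁ hu₁ k) (hA2.stateMem Δ hΔ u₂ hu₂ k)
    (hA2.integrable_comp hΔ hf hp hp2 hu₁ k) (hA2.integrable_comp hΔ hf hp hp2 hu₂ k)
    (by positivity) (by simpa only [enorm_eq_nnnorm] using hA2.contract Δ hΔ u₁ hu₁ u₂ hu₂ k)
    (by positivity) (hA2.lintegral_enorm_rpow_le hΔ hu₁ k hp hpq)
    (by positivity) (hA2.lintegral_enorm_rpow_le hΔ hu₂ k hp hpq)

end Assumption2

theorem statement9_general
    {E Ω : Type*} [NormedAddCommGroup E] [NormedSpace ℝ E]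
    [SecondCountableTopology E] [MeasurableSpace E] [BorelSpace E]
    {mΩ : MeasurableSpace Ω} (ℙ : Measure Ω) (ℱ : Filtration ℝ mΩ)
    (Eh : ℝ → Set E) (Y : ℝ × ℝ → E → ℕ → Ω → E)
    (ht τt q qt γ₂ κ L₃ L₄ : ℝ) (ρD : ℝ × ℝ → ℝ → ℝ)
    (hA2 : Assumption2 ℙ ℱ Eh Y ht τt q qt γ₂ κ L₃ L₄ ρD)
    (p γ : ℝ) (hp : p ∈ Set.Icc (1 : ℝ) q) (hγ : γ ∈ Set.Ioc (0 : ℝ) 1) :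
    ∃ K > (0 : ℝ), ∀ Δ, Adm ht τt Δ → ∀ f : E → ℝ, MemC (Eh Δ.1) p γ f →
      ∀ u₁ ∈ Eh Δ.1, ∀ u₂ ∈ Eh Δ.1, ∀ k : ℕ,
        |PD ℙ Y Δ k f u₁ - PD ℙ Y Δ k f u₂| ≤
          K * CNorm (Eh Δ.1) p γ f * ‖u₁ - u₂‖ ^ γ *
            (1 + ‖u₁‖ ^ (p * qt / 2 + γ * κ) + ‖u₂‖ ^ (p * qt / 2 + γ * κ)) *
            ρD Δ ((k : ℝ) * Δ.2) ^ γ := by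
  obtain ⟨hp₁, hpq⟩ := hp
  obtain ⟨hγ₀, hγ₁⟩ := hγ
  have hL₃ := hA2.hL₃
  have hL₄ := hA2.hL₄
  refine ⟨9 * (1 + L₄) * (1 + 2 * L₃ ^ (p / q)) ^ (1 / 2 : ℝ), by positivity, ?_⟩
  intro Δ hΔ f hf u₁ hu₁ u₂ hu₂ k
  have hH := hf.holderSeminorm_nonneg ⟨u₁, hu₁⟩
  have hHC : holderSeminorm (Eh Δ.1) p γ f ≤ CNorm (Eh Δ.1) p γ f := by
    rw [CNorm_eq_add]; linarith [hf.growthNorm_nonneg ⟨u₁, hu₁⟩]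
  exact (hA2.abs_PD_sub_le hΔ hf (by linarith) hpq hγ₀ hγ₁ hu₁ hu₂ k).trans
    (contraction_moment_product_le hH hHC hL₄.le (Real.rpow_nonneg hL₃.le _)
      (norm_nonneg (u₁ - u₂)) (norm_nonneg u₁) (norm_nonneg u₂) (hA2.ρD_nonneg _ _) hA2.hκ.1
      (mul_nonneg (by linarith) (by linarith [hA2.hqt])) hγ₀.le hγ₁)

/-- Hölder-type dependence of the numerical semigroup on the initial
datum: `|P^Δ_{t_k} f(u₁) − P^Δ_{t_k} f(u₂)| ≤
K‖f‖_{p,γ}‖u₁−u₂‖^γ(1+‖u₁‖^{pq̃/2+γκ}+‖u₂‖^{pq̃/2+γκ})(ρ^Δ(t_k))^γ`. -/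
theorem statement9
    {E Ω : Type*} [NormedAddCommGroup E] [NormedSpace ℝ E] [CompleteSpace E]
    [SecondCountableTopology E] [MeasurableSpace E] [BorelSpace E]
    {mΩ : MeasurableSpace Ω} (ℙ : Measure Ω) (ℱ : Filtration ℝ mΩ)
    (Eh : ℝ → Set E) (Y : ℝ × ℝ → E → ℕ → Ω → E)
    (ht τt q qt γ₂ κ L₃ L₄ : ℝ) (ρD : ℝ × ℝ → ℝ → ℝ)
    (hA2 : Assumption2 ℙ ℱ Eh Y ht τt q qt γ₂ κ L₃ L₄ ρD)
    (μD : ℝ × ℝ → Measure E)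
    (hμD : ∀ Δ, Adm ht τt Δ → IsInvMeasureD ℙ Y (Eh Δ.1) Δ (μD Δ))
    (p γ : ℝ) (hp : p ∈ Set.Icc (1 : ℝ) q) (hγ : γ ∈ Set.Ioc (0 : ℝ) 1) :
    ∃ K > (0 : ℝ), ∀ Δ, Adm ht τt Δ → ∀ f : E → ℝ, MemC (Eh Δ.1) p γ f →
      ∀ u₁ ∈ Eh Δ.1, ∀ u₂ ∈ Eh Δ.1, ∀ k : ℕ,
        |PD ℙ Y Δ k f u₁ - PD ℙ Y Δ k f u₂| ≤
          K * CNorm (Eh Δ.1) p γ f * ‖u₁ - u₂‖ ^ γ *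
            (1 + ‖u₁‖ ^ (p * qt / 2 + γ * κ) + ‖u₂‖ ^ (p * qt / 2 + γ * κ)) *
            ρD Δ ((k : ℝ) * Δ.2) ^ γ :=
  statement9_general ℙ ℱ Eh Y ht τt q qt γ₂ κ L₃ L₄ ρD hA2 p γ hp hγ
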